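/- arXiv:2001.08803 — 5 statements merged into one kernel-verified Lean document; each statement's English description precedes it below -/
import Mathlib

section
/- Let p_1, …, p_n be single-target pdfs and K a single-target transition density, and let p⁻_i(y) = ∫_E K(y, x) p_i(x) dμ(x) be the predicted single-target pdfs. Then for every Y = (y_1, …, y_n) ∈ E^n, (1/n!) ∫_{E^n} [∑_{ν ∈ Perm(Fin n)} ∏_{i=1}^n K(y_{ν(i)}, x_i)] · [∑_{μ ∈ Perm(Fin n)} ∏_{i=1}^n p_i(x_{μ(i)})] dμ^{⊗n}(x) = ∑_{ν ∈ Perm(Fin n)} ∏_{i=1}^n p⁻_i(y_{ν(i)}); i.e., the FISST-predicted multi-target pdf of a symmetrized product of single-target pdfs is the symmetrized product of the predicted single-target pdfs. (Proposition 1.) -/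
open MeasureTheory
open scoped NNReal ENNReal

lemma lintegral_pi_prod {n : ℕ} {E : Type*} [MeasurableSpace E] (μ : Measure E) [SigmaFinite μ]
    (f : Fin n → E → ℝ≥0∞) (hf : ∀ i, Measurable (f i)) :
    ∫⁻ x : Fin n → E, ∏ i, f i (x i) ∂(Measure.pi fun _ : Fin n => μ) = ∏ i, ∫⁻ x, f i x ∂μ := by
  induction n with
  | zero => simp
  | succ n ih =>
    have hmp := (measurePreserving_piFinSuccAbove (fun _ : Fin (n + 1) => μ) 0).symm
    calc
      _ = ∫⁻ x : E × (Fin n → E), f 0 x.1 * ∏ i : Fin n, f (Fin.succ i) (x.2 i)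
          ∂((μ : Measure E).prod (Measure.pi fun _ : Fin n => μ)) := by
        rw [← hmp.map_eq, lintegral_map_equiv]
        congr 1; ext x
        simp [MeasurableEquiv.piFinSuccAbove_symm_apply, Fin.insertNthEquiv,
          Fin.prod_univ_succ, Fin.insertNth_zero, Fin.cons_succ,
          Fin.zero_succAbove, Fin.cons_zero]
      _ = (∫⁻ x, f 0 x ∂μ) * ∏ i : Fin n, ∫⁻ x, f (Fin.succ i) x ∂μ := by
        rw [← ih (fun i => f (Fin.succ i)) (fun i => hf _), ← lintegral_prod_mul (hf 0).aemeasurable]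
        exact (Finset.measurable_prod _ fun i _ => (hf _).comp (measurable_pi_apply i)).aemeasurable
      _ = ∏ i, ∫⁻ x, f i x ∂μ := by rw [Fin.prod_univ_succ]

/-- **Proposition 1 (FISST prediction of a symmetrized product of pdfs).**
Let `p 1, …, p n` be single-target pdfs, `K` a single-target transition density, and
`p⁻ i y = ∫ K(y,x) pᵢ(x) dμ(x)` the predicted single-target pdfs.  Then for every
`Y ∈ Eⁿ`,
`(1/n!) ∫_{Eⁿ} (∑_ν ∏ᵢ K(y_{ν i}, xᵢ)) (∑_μ ∏ᵢ pᵢ(x_{μ i})) dμ^{⊗n}(x)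
  = ∑_ν ∏ᵢ p⁻ᵢ(y_{ν i})`:
the FISST-predicted multi-target pdf of a symmetrized product of single-target pdfs is
the symmetrized product of the predicted single-target pdfs. -/
theorem fisst_prediction_fixed_targets
    {E : Type*} [MeasurableSpace E] (μ : Measure E) [SigmaFinite μ]
    (n : ℕ) (p : Fin n → E → ℝ≥0)
    (hpm : ∀ i, Measurable (p i))
    (hp1 : ∀ i, ∫⁻ x, (p i x : ℝ≥0∞) ∂μ = 1)
    (K : E → E → ℝ≥0) (hKm : Measurable (Function.uncurry K))
    (hK1 : ∀ x, ∫⁻ y, (K y x : ℝ≥0∞) ∂μ = 1)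
    (ppred : Fin n → E → ℝ≥0∞)
    (hppred : ∀ i y, ppred i y = ∫⁻ x, (K y x : ℝ≥0∞) * (p i x : ℝ≥0∞) ∂μ)
    (Y : Fin n → E) :
    (∫⁻ x : Fin n → E,
        (∑ ν : Equiv.Perm (Fin n), ∏ i, (K (Y (ν i)) (x i) : ℝ≥0∞)) *
          (∑ ν : Equiv.Perm (Fin n), ∏ i, (p i (x (ν i)) : ℝ≥0∞))
        ∂(Measure.pi fun _ : Fin n => μ)) / (Nat.factorial n : ℝ≥0∞) =
      ∑ ν : Equiv.Perm (Fin n), ∏ i, ppred i (Y (ν i)) := by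
  have hKym : ∀ y : E, Measurable fun x => ((K y x : ℝ≥0∞)) := by
    intro y
    exact (measurable_coe_nnreal_ennreal.comp
      (hKm.comp (measurable_const.prodMk measurable_id)))
  have hpm' : ∀ i, Measurable fun x => ((p i x : ℝ≥0∞)) :=
    fun i => measurable_coe_nnreal_ennreal.comp (hpm i)
  -- key computation for each pair of permutations
  have key : ∀ ν σ : Equiv.Perm (Fin n),
      (∫⁻ x : Fin n → E,
        (∏ i, (K (Y (ν i)) (x i) : ℝ≥0∞)) * ∏ i, (p i (x (σ i)) : ℝ≥0∞)
        ∂(Measure.pi fun _ : Fin n => μ)) =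
      ∏ i, ppred i (Y (ν (σ i))) := by
    intro ν σ
    have h1 : ∀ x : Fin n → E,
        (∏ i, (K (Y (ν i)) (x i) : ℝ≥0∞)) * ∏ i, (p i (x (σ i)) : ℝ≥0∞)
          = ∏ i, ((K (Y (ν i)) (x i) : ℝ≥0∞) * (p (σ⁻¹ i) (x i) : ℝ≥0∞)) := by
      intro x
      rw [Finset.prod_mul_distrib]
      congr 1
      rw [← Equiv.prod_comp σ⁻¹ (fun i => (p i (x (σ i)) : ℝ≥0∞))]
      simp
    simp_rw [h1]
    rw [lintegral_pi_prod μ (fun i x => (K (Y (ν i)) x : ℝ≥0∞) * (p (σ⁻¹ i) x : ℝ≥0∞)) (fun i => (hKym _).mul (hpm' _))]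
    calc
      ∏ i, ∫⁻ x, (K (Y (ν i)) x : ℝ≥0∞) * (p (σ⁻¹ i) x : ℝ≥0∞) ∂μ
          = ∏ i, ppred (σ⁻¹ i) (Y (ν i)) := by
        refine Finset.prod_congr rfl fun i _ => ?_
        rw [hppred]
      _ = ∏ i, ppred i (Y (ν (σ i))) := by
        rw [← Equiv.prod_comp σ (fun i => ppred (σ⁻¹ i) (Y (ν i)))]
        simp
  -- expand the product of sums and integrate term by term
  have expand : (∫⁻ x : Fin n → E,
        (∑ ν : Equiv.Perm (Fin n), ∏ i, (K (Y (ν i)) (x i) : ℝ≥0∞)) *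
          (∑ ν : Equiv.Perm (Fin n), ∏ i, (p i (x (ν i)) : ℝ≥0∞))
        ∂(Measure.pi fun _ : Fin n => μ))
      = ∑ ν : Equiv.Perm (Fin n), ∑ σ : Equiv.Perm (Fin n),
          ∏ i, ppred i (Y (ν (σ i))) := by
    have : ∀ x : Fin n → E,
        (∑ ν : Equiv.Perm (Fin n), ∏ i, (K (Y (ν i)) (x i) : ℝ≥0∞)) *
          (∑ ν : Equiv.Perm (Fin n), ∏ i, (p i (x (ν i)) : ℝ≥0∞))
        = ∑ ν : Equiv.Perm (Fin n), ∑ σ : Equiv.Perm (Fin n),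
            (∏ i, (K (Y (ν i)) (x i) : ℝ≥0∞)) * ∏ i, (p i (x (σ i)) : ℝ≥0∞) := by
      intro x; rw [Finset.sum_mul_sum]
    simp_rw [this]
    rw [lintegral_finset_sum]
    · exact Finset.sum_congr rfl fun ν _ => by
        rw [lintegral_finset_sum]
        · exact Finset.sum_congr rfl fun σ _ => key ν σ
        · intro σ _
          exact (Finset.measurable_prod _ fun i _ =>
              (hKym _).comp (measurable_pi_apply i)).mul
            (Finset.measurable_prod _ fun i _ => (hpm' _).comp (measurable_pi_apply _))
    · intro ν _
      exact Finset.measurable_sum _ fun σ _ =>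
        (Finset.measurable_prod _ fun i _ =>
            (hKym _).comp (measurable_pi_apply i)).mul
          (Finset.measurable_prod _ fun i _ => (hpm' _).comp (measurable_pi_apply _))
  rw [expand]
  -- reindex the inner sum: ν ∘ σ ranges over all permutations
  have reindex : ∀ σ : Equiv.Perm (Fin n),
      (∑ ν : Equiv.Perm (Fin n), ∏ i, ppred i (Y (ν (σ i))))
        = ∑ τ : Equiv.Perm (Fin n), ∏ i, ppred i (Y (τ i)) := by
    intro σ
    have h := Equiv.sum_comp (Equiv.mulRight σ)
      (fun τ : Equiv.Perm (Fin n) => ∏ i, ppred i (Y (τ i)))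
    simp only [Equiv.coe_mulRight, Equiv.Perm.mul_apply] at h
    exact h
  rw [Finset.sum_comm]
  simp_rw [reindex]
  rw [Finset.sum_const, Finset.card_univ, Fintype.card_perm, nsmul_eq_mul]
  rw [Fintype.card_fin, mul_div_assoc,
    ENNReal.mul_div_cancel (by exact_mod_cast (Nat.factorial_pos n).ne')
      (ENNReal.natCast_ne_top _)]
end

section
/- Let Q be a finite set of n-target hypotheses, where hypothesis q has weight ω_q ≥ 0 and single-target pdfs p_{q,1}, …, p_{q,n}, and let K be a single-target transition density with predicted components p⁻_{q,i}(y) = ∫_E K(y, x) p_{q,i}(x) dμ(x). Then for every Y = (y_1,…,y_n) ∈ E^n, (1/n!) ∫_{E^n} [∑_{ν ∈ Perm(Fin n)} ∏_{i=1}^n K(y_{ν(i)}, x_i)] · [∑_{q ∈ Q} ω_q ∑_{μ ∈ Perm(Fin n)} ∏_{i=1}^n p_{q,i}(x_{μ(i)})] dμ^{⊗n}(x) = ∑_{q ∈ Q} ω_q ∑_{ν ∈ Perm(Fin n)} ∏_{i=1}^n p⁻_{q,i}(y_{ν(i)}); i.e., under prediction without birth or death, each hypothesis keeps its weight and its components are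 predicted independently. (Proposition 3, prediction step.) -/
open MeasureTheory
open scoped NNReal ENNReal

theorem my_lintegral_pi_prod {E : Type*} [MeasurableSpace E] (μ : Measure E) [SigmaFinite μ]
    {n : ℕ} (f : Fin n → E → ℝ≥0∞) (hf : ∀ i, Measurable (f i)) :
    ∫⁻ x : Fin n → E, ∏ i, f i (x i) ∂(Measure.pi fun _ : Fin n => μ)
      = ∏ i, ∫⁻ x, f i x ∂μ := by
  induction n with
  | zero => simp
  | succ m ih =>
    have h := (measurePreserving_piFinSuccAbove (fun _ : Fin (m + 1) => μ) 0).symm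
    have hmeas : Measurable fun x : Fin (m + 1) → E => ∏ i, f i (x i) :=
      Finset.measurable_prod _ fun i _ => (hf i).comp (measurable_pi_apply i)
    rw [← h.lintegral_comp hmeas]
    simp_rw [MeasurableEquiv.piFinSuccAbove_symm_apply, Fin.insertNthEquiv,
      Equiv.coe_fn_mk, Fin.insertNth_zero, Fin.prod_univ_succ, Fin.cons_zero, Fin.cons_succ]
    simp only [Fin.zero_succAbove, cast_eq]
    rw [lintegral_prod_mul (f := fun y => f 0 y)
      (g := fun y : Fin m → E => ∏ i, f i.succ (y i)) ((hf 0).aemeasurable)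
      ((Finset.measurable_prod (Finset.univ) (fun i _ =>
        (hf i.succ).comp (measurable_pi_apply i)) :
        Measurable fun y : Fin m → E => ∏ i, f i.succ (y i)).aemeasurable)]
    rw [ih (fun i => f i.succ) (fun i => hf i.succ)]

/-- **Proposition 3, prediction step.** Let `Q` be a finite set of `n`-target hypotheses,
hypothesis `q` having weight `ω q ≥ 0` and single-target pdfs `p q 1, …, p q n`, and let `K`
be a single-target transition density with predicted components
`p⁻ q i y = ∫ K(y,x) p q i (x) dμ(x)`.  Then for every `Y ∈ Eⁿ`,
`(1/n!) ∫_{Eⁿ} (∑_ν ∏ᵢ K(y_{ν i}, xᵢ)) (∑_q ω_q ∑_μ ∏ᵢ p_{q,i}(x_{μ i})) dμ^{⊗n}(x)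
  = ∑_q ω_q ∑_ν ∏ᵢ p⁻_{q,i}(y_{ν i})`:
under prediction without birth or death each hypothesis keeps its weight and its
components are predicted independently. -/
theorem fisst_prediction_step_hypotheses
    {E : Type*} [MeasurableSpace E] (μ : Measure E) [SigmaFinite μ]
    {Q : Type*} [Fintype Q]
    (n : ℕ) (ω : Q → ℝ≥0) (p : Q → Fin n → E → ℝ≥0)
    (hpm : ∀ q i, Measurable (p q i))
    (hp1 : ∀ q i, ∫⁻ x, (p q i x : ℝ≥0∞) ∂μ = 1)
    (K : E → E → ℝ≥0) (hKm : Measurable (Function.uncurry K))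
    (hK1 : ∀ x, ∫⁻ y, (K y x : ℝ≥0∞) ∂μ = 1)
    (ppred : Q → Fin n → E → ℝ≥0∞)
    (hppred : ∀ q i y, ppred q i y = ∫⁻ x, (K y x : ℝ≥0∞) * (p q i x : ℝ≥0∞) ∂μ)
    (Y : Fin n → E) :
    (∫⁻ x : Fin n → E,
        (∑ ν : Equiv.Perm (Fin n), ∏ i, (K (Y (ν i)) (x i) : ℝ≥0∞)) *
          (∑ q : Q, (ω q : ℝ≥0∞) *
            ∑ ν : Equiv.Perm (Fin n), ∏ i, (p q i (x (ν i)) : ℝ≥0∞))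
        ∂(Measure.pi fun _ : Fin n => μ)) / (Nat.factorial n : ℝ≥0∞) =
      ∑ q : Q, (ω q : ℝ≥0∞) * ∑ ν : Equiv.Perm (Fin n), ∏ i, ppred q i (Y (ν i)) := by
  classical
  have hKy : ∀ y, Measurable fun x : E => (K y x : ℝ≥0∞) := fun y =>
    measurable_coe_nnreal_ennreal.comp (hKm.comp (measurable_const.prodMk measurable_id))
  have hpc : ∀ q i, Measurable fun x : E => (p q i x : ℝ≥0∞) := fun q i =>
    measurable_coe_nnreal_ennreal.comp (hpm q i)
  have hA : ∀ ν : Equiv.Perm (Fin n),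
      Measurable fun x : Fin n → E => ∏ i, (K (Y (ν i)) (x i) : ℝ≥0∞) := fun ν =>
    Finset.measurable_prod _ fun i _ => (hKy (Y (ν i))).comp (measurable_pi_apply i)
  have hB : ∀ (q : Q) (σ : Equiv.Perm (Fin n)),
      Measurable fun x : Fin n → E => ∏ i, (p q i (x (σ i)) : ℝ≥0∞) := fun q σ =>
    Finset.measurable_prod _ fun i _ => (hpc q i).comp (measurable_pi_apply (σ i))
  have key : ∀ (q : Q) (ν σ : Equiv.Perm (Fin n)),
      (∫⁻ x : Fin n → E,
          (∏ i, (K (Y (ν i)) (x i) : ℝ≥0∞)) * ∏ i, (p q i (x (σ i)) : ℝ≥0∞)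
        ∂(Measure.pi fun _ : Fin n => μ))
        = ∏ j, ppred q j (Y ((ν * σ) j)) := by
    intro q ν σ
    have h1 : ∀ x : Fin n → E,
        (∏ i, (p q i (x (σ i)) : ℝ≥0∞)) = ∏ i, (p q (σ.symm i) (x i) : ℝ≥0∞) := by
      intro x
      rw [← Equiv.prod_comp σ fun i => (p q (σ.symm i) (x i) : ℝ≥0∞)]
      simp
    calc
      (∫⁻ x : Fin n → E,
          (∏ i, (K (Y (ν i)) (x i) : ℝ≥0∞)) * ∏ i, (p q i (x (σ i)) : ℝ≥0∞)
        ∂(Measure.pi fun _ : Fin n => μ))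
          = ∫⁻ x : Fin n → E,
              ∏ i, ((K (Y (ν i)) (x i) : ℝ≥0∞) * (p q (σ.symm i) (x i) : ℝ≥0∞))
            ∂(Measure.pi fun _ : Fin n => μ) := by
        simp_rw [h1, ← Finset.prod_mul_distrib]
      _ = ∏ i, ∫⁻ x, (K (Y (ν i)) x : ℝ≥0∞) * (p q (σ.symm i) x : ℝ≥0∞) ∂μ :=
        my_lintegral_pi_prod μ _ (fun i => (hKy _).mul (hpc q _))
      _ = ∏ i, ppred q (σ.symm i) (Y (ν i)) := by simp_rw [hppred]
      _ = ∏ j, ppred q j (Y ((ν * σ) j)) := by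
        rw [← Equiv.prod_comp σ fun i => ppred q (σ.symm i) (Y (ν i))]
        simp [Equiv.Perm.mul_apply]
  have hfac0 : (Nat.factorial n : ℝ≥0∞) ≠ 0 :=
    Nat.cast_ne_zero.mpr (Nat.factorial_ne_zero n)
  have hfact : (Nat.factorial n : ℝ≥0∞) ≠ ⊤ := ENNReal.natCast_ne_top _
  have inner : ∀ q : Q,
      (∫⁻ x : Fin n → E,
          (∑ ν : Equiv.Perm (Fin n), ∏ i, (K (Y (ν i)) (x i) : ℝ≥0∞)) *
            (∑ σ : Equiv.Perm (Fin n), ∏ i, (p q i (x (σ i)) : ℝ≥0∞))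
        ∂(Measure.pi fun _ : Fin n => μ))
        = (Nat.factorial n : ℝ≥0∞) *
            ∑ τ : Equiv.Perm (Fin n), ∏ j, ppred q j (Y (τ j)) := by
    intro q
    have hpt : ∀ x : Fin n → E,
        (∑ ν : Equiv.Perm (Fin n), ∏ i, (K (Y (ν i)) (x i) : ℝ≥0∞)) *
            (∑ σ : Equiv.Perm (Fin n), ∏ i, (p q i (x (σ i)) : ℝ≥0∞))
          = ∑ ν : Equiv.Perm (Fin n), ∑ σ : Equiv.Perm (Fin n),
              (∏ i, (K (Y (ν i)) (x i) : ℝ≥0∞)) * ∏ i, (p q i (x (σ i)) : ℝ≥0∞) := by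
      intro x
      rw [Finset.sum_mul]
      exact Finset.sum_congr rfl fun ν _ => Finset.mul_sum _ _ _
    simp_rw [hpt]
    rw [lintegral_finset_sum (f := fun (ν : Equiv.Perm (Fin n)) (x : Fin n → E) => ∑ σ : Equiv.Perm (Fin n),
        (∏ i, (K (Y (ν i)) (x i) : ℝ≥0∞)) * ∏ i, (p q i (x (σ i)) : ℝ≥0∞)) _ (fun ν _ =>
      Finset.measurable_sum _ fun σ _ => (hA ν).mul (hB q σ))]
    have : ∀ ν : Equiv.Perm (Fin n),
        (∫⁻ x : Fin n → E, ∑ σ : Equiv.Perm (Fin n),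
            (∏ i, (K (Y (ν i)) (x i) : ℝ≥0∞)) * ∏ i, (p q i (x (σ i)) : ℝ≥0∞)
          ∂(Measure.pi fun _ : Fin n => μ))
          = ∑ τ : Equiv.Perm (Fin n), ∏ j, ppred q j (Y (τ j)) := by
      intro ν
      rw [lintegral_finset_sum (f := fun (σ : Equiv.Perm (Fin n)) (x : Fin n → E) =>
        (∏ i, (K (Y (ν i)) (x i) : ℝ≥0∞)) * ∏ i, (p q i (x (σ i)) : ℝ≥0∞)) _
        (fun σ _ => (hA ν).mul (hB q σ))]
      have := Equiv.sum_comp (Equiv.mulLeft ν)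
        (fun τ : Equiv.Perm (Fin n) => ∏ j, ppred q j (Y (τ j)))
      simp only [Equiv.coe_mulLeft] at this
      rw [← this]
      exact Finset.sum_congr rfl fun σ _ => key q ν σ
    simp [this, Finset.sum_const, Finset.card_univ, Fintype.card_perm,
      Fintype.card_fin, nsmul_eq_mul]
  have main :
      (∫⁻ x : Fin n → E,
          (∑ ν : Equiv.Perm (Fin n), ∏ i, (K (Y (ν i)) (x i) : ℝ≥0∞)) *
            (∑ q : Q, (ω q : ℝ≥0∞) *
              ∑ ν : Equiv.Perm (Fin n), ∏ i, (p q i (x (ν i)) : ℝ≥0∞))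
        ∂(Measure.pi fun _ : Fin n => μ))
        = (Nat.factorial n : ℝ≥0∞) *
            ∑ q : Q, (ω q : ℝ≥0∞) *
              ∑ ν : Equiv.Perm (Fin n), ∏ i, ppred q i (Y (ν i)) := by
    have hpt : ∀ x : Fin n → E,
        (∑ ν : Equiv.Perm (Fin n), ∏ i, (K (Y (ν i)) (x i) : ℝ≥0∞)) *
            (∑ q : Q, (ω q : ℝ≥0∞) *
              ∑ ν : Equiv.Perm (Fin n), ∏ i, (p q i (x (ν i)) : ℝ≥0∞))
          = ∑ q : Q, (ω q : ℝ≥0∞) *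
              ((∑ ν : Equiv.Perm (Fin n), ∏ i, (K (Y (ν i)) (x i) : ℝ≥0∞)) *
                (∑ σ : Equiv.Perm (Fin n), ∏ i, (p q i (x (σ i)) : ℝ≥0∞))) := by
      intro x
      rw [Finset.mul_sum]
      exact Finset.sum_congr rfl fun q _ => mul_left_comm _ _ _
    simp_rw [hpt]
    rw [lintegral_finset_sum (f := fun (q : Q) (x : Fin n → E) => (ω q : ℝ≥0∞) *
        ((∑ ν : Equiv.Perm (Fin n), ∏ i, (K (Y (ν i)) (x i) : ℝ≥0∞)) *
          (∑ σ : Equiv.Perm (Fin n), ∏ i, (p q i (x (σ i)) : ℝ≥0∞)))) _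
      (fun q _ => measurable_const.mul
      ((Finset.measurable_sum _ fun ν _ => hA ν).mul
        (Finset.measurable_sum _ fun σ _ => hB q σ)))]
    have : ∀ q : Q,
        (∫⁻ x : Fin n → E, (ω q : ℝ≥0∞) *
            ((∑ ν : Equiv.Perm (Fin n), ∏ i, (K (Y (ν i)) (x i) : ℝ≥0∞)) *
              (∑ σ : Equiv.Perm (Fin n), ∏ i, (p q i (x (σ i)) : ℝ≥0∞)))
          ∂(Measure.pi fun _ : Fin n => μ))
          = (ω q : ℝ≥0∞) * ((Nat.factorial n : ℝ≥0∞) *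
              ∑ τ : Equiv.Perm (Fin n), ∏ j, ppred q j (Y (τ j))) := by
      intro q
      rw [lintegral_const_mul (f := fun (x : Fin n → E) =>
          (∑ ν : Equiv.Perm (Fin n), ∏ i, (K (Y (ν i)) (x i) : ℝ≥0∞)) *
            (∑ σ : Equiv.Perm (Fin n), ∏ i, (p q i (x (σ i)) : ℝ≥0∞))) _ ((Finset.measurable_sum _ fun ν _ => hA ν).mul
        (Finset.measurable_sum _ fun σ _ => hB q σ)), inner q]
    simp_rw [this, mul_left_comm _ ((Nat.factorial n : ℝ≥0∞)) _, ← Finset.mul_sum]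
  rw [main, mul_comm, mul_div_assoc, ENNReal.div_self hfac0 hfact, mul_one]
end

section
/- Let Q be a finite set of hypotheses, where hypothesis q has cardinality n_q, weight ω_q ≥ 0, and single-target pdfs p_{q,1}, …, p_{q,n_q}, giving the prior multi-target pdf family p(X', r) = ∑_{q : n_q = r} ω_q ∑_{μ ∈ Perm(Fin r)} ∏_{i=1}^r p_{q,i}(x'_{μ(i)}). Let K be a single-target transition density with predicted components p⁻_{q,i}(y) = ∫_E K(y, x) p_{q,i}(x) dμ(x). Define the predicted family p⁻(Y, n) := ∑_{r ≤ n} (1/r!) ∫_{E^r} p(Y, n | X', r) p(X', r) dμ^{⊗r}(X'). Then for every Y = (y_1,…,y_n) ∈ E^n, p⁻(Y, n) = ∑_{q ∈ Q} ∑_{B ⊆ {1,…,M}, |B| = n − n_q} α^{n−n_q} (1−α)^{M−(n−n_q)} ω_q ∑_{ν ∈ Perm(Fin n)} ∏_{i=1}^{n_q} p⁻_{q,i}(y_{ν(i)}) ∏_{i=n_q+1}^{n} b_{B(i−n_q)}(y_{ν(i)}); i.e., each predicted hypothesis is a pair v = (q, B) of a prior hypothesis and a birth hypothesis, with weight ω_v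 = p(B) ω_q and multi-target pdf equal to the symmetrized product of the predicted prior components and the birth pdfs of B. (Proposition 4.) -/
open MeasureTheory
open scoped NNReal ENNReal

/-- Birth pdf of pixel `j`: `b_j = 1_{A_j} / V̄`. -/
noncomputable def birthPdf {E : Type*} {M : ℕ} (A : Fin M → Set E) (Vbar : ℝ)
    (j : Fin M) (x : E) : ℝ≥0∞ :=
  (A j).indicator (fun _ => ENNReal.ofReal (1 / Vbar)) x

/-- Enumeration `B(1) < … < B(p)` of a `p`-element birth hypothesis `B ⊆ {1,…,M}`. -/
def birthEnum {M p : ℕ} (B : Finset (Fin M)) (h : B.card = p) (j : Fin p) : Fin M :=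
  (B.orderIsoOfFin h j : Fin M)

/-- The multi-target transition density from `r` targets at `X'` to `n ≥ r` targets at
`X` under the binomial birth model:
`p(X,n|X',r) = ∑_{B : |B| = n−r} α^{n−r}(1−α)^{M−(n−r)}
  ∑_ν ∏_{i<r} K(x_{ν i}, x'_i) ∏_{r≤i<n} b_{B(i−r)}(x_{ν i})`. -/
noncomputable def mtTrans {E : Type*} {M : ℕ} (A : Fin M → Set E) (Vbar α : ℝ)
    (K : E → E → ℝ≥0) (r n : ℕ) (X : Fin n → E) (X' : Fin r → E) : ℝ≥0∞ :=
  ∑ B : {B : Finset (Fin M) // B.card = n - r},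
    ENNReal.ofReal (α ^ (n - r) * (1 - α) ^ (M - (n - r))) *
      ∑ ν : Equiv.Perm (Fin n), ∏ i : Fin n,
        if h : (i : ℕ) < r then (K (X (ν i)) (X' ⟨i, h⟩) : ℝ≥0∞)
        else birthPdf A Vbar
          (birthEnum B.1 B.2 ⟨(i : ℕ) - r, by have := i.isLt; omega⟩) (X (ν i))



lemma lintegral_pi_prod_aux {E : Type*} [MeasurableSpace E] (μ : Measure E) [SigmaFinite μ] :
    ∀ (r : ℕ) (f : Fin r → E → ℝ≥0∞), (∀ i, Measurable (f i)) →
      ∫⁻ X : Fin r → E, ∏ i, f i (X i) ∂(Measure.pi fun _ : Fin r => μ)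
        = ∏ i, ∫⁻ x, f i x ∂μ := by
  intro r
  induction r with
  | zero =>
      intro f hf
      simp [lintegral_const, Measure.pi_univ]
  | succ r ih =>
      intro f hf
      have hmp := measurePreserving_piFinSuccAbove (fun _ : Fin (r + 1) => μ) 0
      have hg : Measurable fun z : E × (Fin r → E) =>
          f 0 z.1 * ∏ j : Fin r, f j.succ (z.2 j) := by
        refine ((hf 0).comp measurable_fst).mul ?_
        exact Finset.measurable_prod _ fun j _ =>
          (hf j.succ).comp ((measurable_pi_apply j).comp measurable_snd)
      calc ∫⁻ X : Fin (r + 1) → E, ∏ i, f i (X i) ∂(Measure.pi fun _ => μ)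
          = ∫⁻ X : Fin (r + 1) → E,
              f 0 (X 0) * ∏ j : Fin r, f j.succ (X j.succ) ∂(Measure.pi fun _ => μ) := by
            simp_rw [Fin.prod_univ_succ]
        _ = ∫⁻ z : E × (Fin r → E), f 0 z.1 * ∏ j : Fin r, f j.succ (z.2 j)
              ∂(μ.prod (Measure.pi fun _ : Fin r => μ)) := by
            rw [← hmp.lintegral_comp hg]
            refine lintegral_congr fun X => ?_
            simp [MeasurableEquiv.piFinSuccAbove, Fin.insertNthEquiv, Fin.succAbove, Fin.tail]
        _ = (∫⁻ x, f 0 x ∂μ) * ∫⁻ X : Fin r → E, ∏ j : Fin r, f j.succ (X j)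
              ∂(Measure.pi fun _ : Fin r => μ) := by
            have hm2 : Measurable fun X : Fin r → E => ∏ j : Fin r, f j.succ (X j) :=
              Finset.measurable_prod _ fun j _ => (hf j.succ).comp (measurable_pi_apply j)
            exact lintegral_prod_mul ((hf 0).aemeasurable) hm2.aemeasurable
        _ = ∏ i, ∫⁻ x, f i x ∂μ := by
            rw [ih _ fun j => hf j.succ, Fin.prod_univ_succ]



lemma key_integral {E : Type*} [MeasurableSpace E] (μ : Measure E) [SigmaFinite μ]
    (lpp : ∀ (r : ℕ) (f : Fin r → E → ℝ≥0∞), (∀ i, Measurable (f i)) →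
      ∫⁻ X : Fin r → E, ∏ i, f i (X i) ∂(Measure.pi fun _ : Fin r => μ)
        = ∏ i, ∫⁻ x, f i x ∂μ)
    (K : E → E → ℝ≥0) (hKm : Measurable (Function.uncurry K))
    {n r : ℕ} (hr : r ≤ n) (g : Fin n → E)
    (f : Fin r → E → ℝ≥0) (hf : ∀ i, Measurable (f i))
    (d : Fin n → Fin n → ℝ≥0∞) :
    ∫⁻ X' : Fin r → E, (∑ ν : Equiv.Perm (Fin n), ∏ i : Fin n,
        if h : (i : ℕ) < r then (K (g (ν i)) (X' ⟨(i : ℕ), h⟩) : ℝ≥0∞) else d i (ν i)) *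
      (∑ σ : Equiv.Perm (Fin r), ∏ j : Fin r, (f j (X' (σ j)) : ℝ≥0∞))
      ∂(Measure.pi fun _ : Fin r => μ)
    = (r.factorial : ℝ≥0∞) * ∑ ν : Equiv.Perm (Fin n), ∏ i : Fin n,
        if h : (i : ℕ) < r then (∫⁻ x, (K (g (ν i)) x : ℝ≥0∞) * (f ⟨(i : ℕ), h⟩ x) ∂μ)
        else d i (ν i) := by
  classical
  have hKy : ∀ y : E, Measurable fun x => (K y x : ℝ≥0∞) := fun y =>
    (hKm.comp measurable_prodMk_left).coe_nnreal_ennreal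
  -- the splitting equivalence
  let e : Fin r ⊕ Fin (n - r) ≃ Fin n :=
    finSumFinEquiv.trans (finCongr (Nat.add_sub_cancel' hr))
  have he1 : ∀ j : Fin r, ((e (Sum.inl j)) : ℕ) = (j : ℕ) := by
    intro j; simp [e, finSumFinEquiv]
  have he2 : ∀ k : Fin (n - r), ((e (Sum.inr k)) : ℕ) = r + (k : ℕ) := by
    intro k; simp [e, finSumFinEquiv]
  have hsplit : ∀ F : Fin n → ℝ≥0∞,
      (∏ i, F i) = (∏ j : Fin r, F (e (Sum.inl j))) * ∏ k : Fin (n - r), F (e (Sum.inr k)) := by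
    intro F; rw [← Equiv.prod_comp e F]; exact Fintype.prod_sum_type _
  -- the permutation extending σ by the identity
  let τ : Equiv.Perm (Fin r) → Equiv.Perm (Fin n) := fun σ =>
    e.permCongr (σ.sumCongr (Equiv.refl (Fin (n - r))))
  have hτ1 : ∀ σ (j : Fin r), τ σ (e (Sum.inl j)) = e (Sum.inl (σ j)) := by
    intro σ j; simp [τ]
  have hτ2 : ∀ σ (k : Fin (n - r)), τ σ (e (Sum.inr k)) = e (Sum.inr k) := by
    intro σ k; simp [τ]
  -- abbreviation for the target summand
  set S : Equiv.Perm (Fin n) → ℝ≥0∞ := fun ρ => ∏ i : Fin n,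
    if h : (i : ℕ) < r then (∫⁻ x, (K (g (ρ i)) x : ℝ≥0∞) * (f ⟨(i : ℕ), h⟩ x) ∂μ)
    else d i (ρ i) with hS
  have hSsplit : ∀ ρ : Equiv.Perm (Fin n), S ρ =
      (∏ j : Fin r, ∫⁻ x, (K (g (ρ (e (Sum.inl j)))) x : ℝ≥0∞) * (f j x) ∂μ) *
        ∏ k : Fin (n - r), d (e (Sum.inr k)) (ρ (e (Sum.inr k))) := by
    intro ρ
    simp only [hS]
    rw [hsplit]
    congr 1
    · refine Finset.prod_congr rfl fun j _ => ?_
      rw [dif_pos (by rw [he1]; exact j.isLt)]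
      congr 1
      all_goals exact Fin.ext (he1 j)
    · refine Finset.prod_congr rfl fun k _ => ?_
      rw [dif_neg (by rw [he2]; omega)]
  -- measurability of the pieces
  have hm1 : ∀ ν : Equiv.Perm (Fin n), Measurable fun X' : Fin r → E =>
      ∏ i : Fin n, if h : (i : ℕ) < r then (K (g (ν i)) (X' ⟨(i : ℕ), h⟩) : ℝ≥0∞)
        else d i (ν i) := by
    intro ν
    refine Finset.measurable_prod _ fun i _ => ?_
    by_cases h : (i : ℕ) < r
    · simpa only [dif_pos h, Function.comp_def] using (hKy (g (ν i))).comp (measurable_pi_apply _)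
    · simpa only [dif_neg h] using measurable_const
  have hm2 : ∀ σ : Equiv.Perm (Fin r), Measurable fun X' : Fin r → E =>
      ∏ j : Fin r, (f j (X' (σ j)) : ℝ≥0∞) :=
    fun σ => Finset.measurable_prod _ fun j _ =>
      ((hf j).comp (measurable_pi_apply (σ j))).coe_nnreal_ennreal
  -- the core computation
  have core : ∀ (ν : Equiv.Perm (Fin n)) (σ : Equiv.Perm (Fin r)),
      ∫⁻ X' : Fin r → E, (∏ i : Fin n,
          if h : (i : ℕ) < r then (K (g (ν i)) (X' ⟨(i : ℕ), h⟩) : ℝ≥0∞) else d i (ν i)) *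
        (∏ j : Fin r, (f j (X' (σ j)) : ℝ≥0∞)) ∂(Measure.pi fun _ : Fin r => μ)
      = S ((τ σ).trans ν) := by
    intro ν σ
    have h1 : ∀ X' : Fin r → E, (∏ i : Fin n,
        if h : (i : ℕ) < r then (K (g (ν i)) (X' ⟨(i : ℕ), h⟩) : ℝ≥0∞) else d i (ν i))
        = (∏ j : Fin r, (K (g (ν (e (Sum.inl j)))) (X' j) : ℝ≥0∞)) *
          ∏ k : Fin (n - r), d (e (Sum.inr k)) (ν (e (Sum.inr k))) := by
      intro X'
      rw [hsplit]
      congr 1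
      · refine Finset.prod_congr rfl fun j _ => ?_
        rw [dif_pos (by rw [he1]; exact j.isLt)]
        congr 1
        all_goals exact Fin.ext (he1 j)
      · refine Finset.prod_congr rfl fun k _ => ?_
        rw [dif_neg (by rw [he2]; omega)]
    have h2 : ∀ X' : Fin r → E, (∏ j : Fin r, (f j (X' (σ j)) : ℝ≥0∞))
        = ∏ j : Fin r, (f (σ.symm j) (X' j) : ℝ≥0∞) := by
      intro X'
      calc (∏ j : Fin r, (f j (X' (σ j)) : ℝ≥0∞))
          = ∏ j : Fin r, (f (σ.symm (σ j)) (X' (σ j)) : ℝ≥0∞) := by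
            refine Finset.prod_congr rfl fun j _ => by rw [Equiv.symm_apply_apply]
        _ = _ := Equiv.prod_comp σ (fun j => (f (σ.symm j) (X' j) : ℝ≥0∞))
    simp_rw [h1, h2]
    have h3 : ∀ X' : Fin r → E,
        ((∏ j : Fin r, (K (g (ν (e (Sum.inl j)))) (X' j) : ℝ≥0∞)) *
          ∏ k : Fin (n - r), d (e (Sum.inr k)) (ν (e (Sum.inr k)))) *
          ∏ j : Fin r, (f (σ.symm j) (X' j) : ℝ≥0∞)
        = (∏ k : Fin (n - r), d (e (Sum.inr k)) (ν (e (Sum.inr k)))) *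
          ∏ j : Fin r, ((K (g (ν (e (Sum.inl j)))) (X' j) : ℝ≥0∞) *
            (f (σ.symm j) (X' j) : ℝ≥0∞)) := by
      intro X'
      rw [Finset.prod_mul_distrib]
      ring
    simp_rw [h3]
    have hm3 : Measurable fun X' : Fin r → E =>
        ∏ j : Fin r, (K (g (ν (e (Sum.inl j)))) (X' j) : ℝ≥0∞) *
          ((f (σ.symm j) (X' j) : ℝ≥0∞)) := by
      refine Finset.measurable_prod _ fun j _ => ?_
      exact ((hKy _).comp (measurable_pi_apply j)).mul
        (((hf (σ.symm j)).comp (measurable_pi_apply j)).coe_nnreal_ennreal)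
    rw [lintegral_const_mul _ hm3]
    rw [lpp r (fun j x => (K (g (ν (e (Sum.inl j)))) x : ℝ≥0∞) * (f (σ.symm j) x : ℝ≥0∞))
      (fun j => (hKy _).mul ((hf (σ.symm j)).coe_nnreal_ennreal))]
    have hCP : (∏ k : Fin (n - r), d (e (Sum.inr k)) (((τ σ).trans ν) (e (Sum.inr k))))
        = ∏ k : Fin (n - r), d (e (Sum.inr k)) (ν (e (Sum.inr k))) :=
      Finset.prod_congr rfl fun k _ => by
        rw [show ((τ σ).trans ν) (e (Sum.inr k)) = ν ((τ σ) (e (Sum.inr k))) from rfl, hτ2]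
    have hPP : (∏ j : Fin r, ∫⁻ x, (K (g (((τ σ).trans ν) (e (Sum.inl j)))) x : ℝ≥0∞) *
          (f j x : ℝ≥0∞) ∂μ)
        = ∏ j : Fin r, ∫⁻ x, (K (g (ν (e (Sum.inl (σ j))))) x : ℝ≥0∞) * (f j x : ℝ≥0∞) ∂μ :=
      Finset.prod_congr rfl fun j _ => by
        rw [show ((τ σ).trans ν) (e (Sum.inl j)) = ν ((τ σ) (e (Sum.inl j))) from rfl, hτ1]
    have hPP2 : (∏ j : Fin r, ∫⁻ x, (K (g (ν (e (Sum.inl (σ j))))) x : ℝ≥0∞) *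
          (f j x : ℝ≥0∞) ∂μ)
        = ∏ j : Fin r, ∫⁻ x, (K (g (ν (e (Sum.inl j)))) x : ℝ≥0∞) *
          (f (σ.symm j) x : ℝ≥0∞) ∂μ := by
      rw [← Equiv.prod_comp σ (fun j =>
        ∫⁻ x, (K (g (ν (e (Sum.inl j)))) x : ℝ≥0∞) * (f (σ.symm j) x : ℝ≥0∞) ∂μ)]
      exact Finset.prod_congr rfl fun j _ => by rw [Equiv.symm_apply_apply]
    rw [hSsplit, hCP, hPP, hPP2, mul_comm]
  -- now put everything together
  calc ∫⁻ X' : Fin r → E, (∑ ν : Equiv.Perm (Fin n), ∏ i : Fin n,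
        if h : (i : ℕ) < r then (K (g (ν i)) (X' ⟨(i : ℕ), h⟩) : ℝ≥0∞) else d i (ν i)) *
      (∑ σ : Equiv.Perm (Fin r), ∏ j : Fin r, (f j (X' (σ j)) : ℝ≥0∞))
      ∂(Measure.pi fun _ : Fin r => μ)
      = ∑ ν : Equiv.Perm (Fin n), ∑ σ : Equiv.Perm (Fin r),
          ∫⁻ X' : Fin r → E, (∏ i : Fin n,
            if h : (i : ℕ) < r then (K (g (ν i)) (X' ⟨(i : ℕ), h⟩) : ℝ≥0∞) else d i (ν i)) *
          (∏ j : Fin r, (f j (X' (σ j)) : ℝ≥0∞)) ∂(Measure.pi fun _ : Fin r => μ) := by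
        simp_rw [Finset.sum_mul_sum]
        rw [lintegral_finset_sum _ fun ν _ => Finset.measurable_sum _ fun σ _ =>
          (hm1 ν).fun_mul (hm2 σ)]
        exact Finset.sum_congr rfl fun ν _ =>
          lintegral_finset_sum _ fun σ _ => (hm1 ν).fun_mul (hm2 σ)
    _ = ∑ σ : Equiv.Perm (Fin r), ∑ ν : Equiv.Perm (Fin n), S ((τ σ).trans ν) := by
        rw [Finset.sum_comm]
        exact Finset.sum_congr rfl fun σ _ => Finset.sum_congr rfl fun ν _ => core ν σ
    _ = ∑ σ : Equiv.Perm (Fin r), ∑ ν : Equiv.Perm (Fin n), S ν := by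
        refine Finset.sum_congr rfl fun σ _ => ?_
        calc ∑ ν : Equiv.Perm (Fin n), S ((τ σ).trans ν)
            = ∑ ν : Equiv.Perm (Fin n), S (Equiv.mulRight (τ σ) ν) :=
              Finset.sum_congr rfl fun ν _ => by
                congr 1
        _ = ∑ ν : Equiv.Perm (Fin n), S ν := Equiv.sum_comp (Equiv.mulRight (τ σ)) S
    _ = (r.factorial : ℝ≥0∞) * ∑ ν : Equiv.Perm (Fin n), S ν := by
        rw [Finset.sum_const, nsmul_eq_mul]
        congr 1
        rw [Finset.card_univ, Fintype.card_perm, Fintype.card_fin]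

/-- Intermediate step: fixed birth-hypothesis factor `d`, summed over prior hypotheses. -/
lemma step_abstract {E : Type*} [MeasurableSpace E] (μ : Measure E) [SigmaFinite μ]
    (K : E → E → ℝ≥0) (hKm : Measurable (Function.uncurry K))
    {Q : Type*} [Fintype Q] (nQ : Q → ℕ) (ω : Q → ℝ≥0)
    (p : (q : Q) → Fin (nQ q) → E → ℝ≥0) (hpm : ∀ q i, Measurable (p q i))
    {n r : ℕ} (hr : r ≤ n) (Y : Fin n → E)
    (d : Fin n → Fin n → ℝ≥0∞) (c : ℝ≥0∞) :
    ∫⁻ X' : Fin r → E,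
      (c * ∑ ν : Equiv.Perm (Fin n), ∏ i : Fin n,
        if h : (i : ℕ) < r then (K (Y (ν i)) (X' ⟨(i : ℕ), h⟩) : ℝ≥0∞) else d i (ν i)) *
      (∑ q : Q, if h : nQ q = r then (ω q : ℝ≥0∞) * ∑ σ : Equiv.Perm (Fin (nQ q)),
          ∏ i, (p q i (X' (Fin.cast h (σ i))) : ℝ≥0∞) else 0)
      ∂(Measure.pi fun _ : Fin r => μ)
    = (r.factorial : ℝ≥0∞) * ∑ q : Q, if nQ q = r then
        c * (ω q : ℝ≥0∞) * ∑ ν : Equiv.Perm (Fin n), ∏ i : Fin n,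
          if h' : (i : ℕ) < nQ q then
            (∫⁻ x, (K (Y (ν i)) x : ℝ≥0∞) * (p q ⟨(i : ℕ), h'⟩ x : ℝ≥0∞) ∂μ)
          else d i (ν i)
      else 0 := by
  classical
  have hKy : ∀ y : E, Measurable fun x => (K y x : ℝ≥0∞) := fun y =>
    (hKm.comp measurable_prodMk_left).coe_nnreal_ennreal
  have hmS : Measurable fun X' : Fin r → E => ∑ ν : Equiv.Perm (Fin n), ∏ i : Fin n,
      if h : (i : ℕ) < r then (K (Y (ν i)) (X' ⟨(i : ℕ), h⟩) : ℝ≥0∞) else d i (ν i) := by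
    refine Finset.measurable_sum _ fun ν _ => Finset.measurable_prod _ fun i _ => ?_
    by_cases h : (i : ℕ) < r
    · simpa only [dif_pos h, Function.comp_def] using (hKy (Y (ν i))).comp (measurable_pi_apply _)
    · simpa only [dif_neg h] using measurable_const
  have hmD : ∀ q : Q, Measurable fun X' : Fin r → E =>
      if h : nQ q = r then (ω q : ℝ≥0∞) * ∑ σ : Equiv.Perm (Fin (nQ q)),
        ∏ i, (p q i (X' (Fin.cast h (σ i))) : ℝ≥0∞) else 0 := by
    intro q
    by_cases h : nQ q = r
    · simp only [dif_pos h]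
      refine measurable_const.mul (Finset.measurable_sum _ fun σ _ =>
        Finset.measurable_prod _ fun i _ => ?_)
      exact ((hpm q i).comp (measurable_pi_apply _)).coe_nnreal_ennreal
    · simpa only [dif_neg h] using measurable_const
  have hint : ∀ X' : Fin r → E,
      (c * ∑ ν : Equiv.Perm (Fin n), ∏ i : Fin n,
        if h : (i : ℕ) < r then (K (Y (ν i)) (X' ⟨(i : ℕ), h⟩) : ℝ≥0∞) else d i (ν i)) *
      (∑ q : Q, if h : nQ q = r then (ω q : ℝ≥0∞) * ∑ σ : Equiv.Perm (Fin (nQ q)),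
          ∏ i, (p q i (X' (Fin.cast h (σ i))) : ℝ≥0∞) else 0)
      = ∑ q : Q,
        ((c * ∑ ν : Equiv.Perm (Fin n), ∏ i : Fin n,
          if h : (i : ℕ) < r then (K (Y (ν i)) (X' ⟨(i : ℕ), h⟩) : ℝ≥0∞) else d i (ν i)) *
        (if h : nQ q = r then (ω q : ℝ≥0∞) * ∑ σ : Equiv.Perm (Fin (nQ q)),
          ∏ i, (p q i (X' (Fin.cast h (σ i))) : ℝ≥0∞) else 0)) :=
    fun X' => Finset.mul_sum _ _ _
  refine (lintegral_congr hint).trans ?_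
  refine (lintegral_finset_sum _ fun q _ =>
    (measurable_const.fun_mul hmS).fun_mul (hmD q)).trans ?_
  rw [Finset.mul_sum]
  refine Finset.sum_congr rfl fun q _ => ?_
  by_cases h : nQ q = r
  · subst h
    rw [if_pos rfl]
    have hbranch : ∀ X' : Fin (nQ q) → E,
        (if h : nQ q = nQ q then (ω q : ℝ≥0∞) * ∑ σ : Equiv.Perm (Fin (nQ q)),
          ∏ i, (p q i (X' (Fin.cast h (σ i))) : ℝ≥0∞) else 0)
        = (ω q : ℝ≥0∞) * ∑ σ : Equiv.Perm (Fin (nQ q)),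
          ∏ i, (p q i (X' (σ i)) : ℝ≥0∞) := fun X' => by rw [dif_pos rfl]; rfl
    have hre : ∀ X' : Fin (nQ q) → E,
        (c * ∑ ν : Equiv.Perm (Fin n), ∏ i : Fin n,
          if h : (i : ℕ) < nQ q then (K (Y (ν i)) (X' ⟨(i : ℕ), h⟩) : ℝ≥0∞) else d i (ν i)) *
        ((ω q : ℝ≥0∞) * ∑ σ : Equiv.Perm (Fin (nQ q)),
          ∏ i, (p q i (X' (σ i)) : ℝ≥0∞))
        = (c * (ω q : ℝ≥0∞)) *
          ((∑ ν : Equiv.Perm (Fin n), ∏ i : Fin n,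
            if h : (i : ℕ) < nQ q then (K (Y (ν i)) (X' ⟨(i : ℕ), h⟩) : ℝ≥0∞) else d i (ν i)) *
          (∑ σ : Equiv.Perm (Fin (nQ q)), ∏ i, (p q i (X' (σ i)) : ℝ≥0∞))) := by
      intro X'; ring
    calc ∫⁻ X' : Fin (nQ q) → E,
          (c * ∑ ν : Equiv.Perm (Fin n), ∏ i : Fin n,
            if h : (i : ℕ) < nQ q then (K (Y (ν i)) (X' ⟨(i : ℕ), h⟩) : ℝ≥0∞) else d i (ν i)) *
          (if h : nQ q = nQ q then (ω q : ℝ≥0∞) * ∑ σ : Equiv.Perm (Fin (nQ q)),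
            ∏ i, (p q i (X' (Fin.cast h (σ i))) : ℝ≥0∞) else 0)
          ∂(Measure.pi fun _ : Fin (nQ q) => μ)
        = ∫⁻ X' : Fin (nQ q) → E,
          (c * (ω q : ℝ≥0∞)) *
          ((∑ ν : Equiv.Perm (Fin n), ∏ i : Fin n,
            if h : (i : ℕ) < nQ q then (K (Y (ν i)) (X' ⟨(i : ℕ), h⟩) : ℝ≥0∞) else d i (ν i)) *
          (∑ σ : Equiv.Perm (Fin (nQ q)), ∏ i, (p q i (X' (σ i)) : ℝ≥0∞)))
          ∂(Measure.pi fun _ : Fin (nQ q) => μ) :=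
          lintegral_congr fun X' => by rw [hbranch X', hre X']
      _ = (c * (ω q : ℝ≥0∞)) * ∫⁻ X' : Fin (nQ q) → E,
          (∑ ν : Equiv.Perm (Fin n), ∏ i : Fin n,
            if h : (i : ℕ) < nQ q then (K (Y (ν i)) (X' ⟨(i : ℕ), h⟩) : ℝ≥0∞) else d i (ν i)) *
          (∑ σ : Equiv.Perm (Fin (nQ q)), ∏ i, (p q i (X' (σ i)) : ℝ≥0∞))
          ∂(Measure.pi fun _ : Fin (nQ q) => μ) := by
          refine lintegral_const_mul _ ?_
          refine hmS.mul (Finset.measurable_sum _ fun σ _ =>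
            Finset.measurable_prod _ fun i _ => ?_)
          exact ((hpm q i).comp (measurable_pi_apply _)).coe_nnreal_ennreal
      _ = (c * (ω q : ℝ≥0∞)) * (((nQ q).factorial : ℝ≥0∞) *
            ∑ ν : Equiv.Perm (Fin n), ∏ i : Fin n,
              if h' : (i : ℕ) < nQ q then
                (∫⁻ x, (K (Y (ν i)) x : ℝ≥0∞) * (p q ⟨(i : ℕ), h'⟩ x : ℝ≥0∞) ∂μ)
              else d i (ν i)) := by
          rw [key_integral μ (lintegral_pi_prod_aux μ) K hKm hr Y (p q) (hpm q) d]
      _ = ((nQ q).factorial : ℝ≥0∞) *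
          (c * (ω q : ℝ≥0∞) * ∑ ν : Equiv.Perm (Fin n), ∏ i : Fin n,
            if h' : (i : ℕ) < nQ q then
              (∫⁻ x, (K (Y (ν i)) x : ℝ≥0∞) * (p q ⟨(i : ℕ), h'⟩ x : ℝ≥0∞) ∂μ)
            else d i (ν i)) := by ring
  · rw [if_neg h]
    have hzero : ∀ X' : Fin r → E,
        (c * ∑ ν : Equiv.Perm (Fin n), ∏ i : Fin n,
          if h : (i : ℕ) < r then (K (Y (ν i)) (X' ⟨(i : ℕ), h⟩) : ℝ≥0∞) else d i (ν i)) *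
        (if h : nQ q = r then (ω q : ℝ≥0∞) * ∑ σ : Equiv.Perm (Fin (nQ q)),
          ∏ i, (p q i (X' (Fin.cast h (σ i))) : ℝ≥0∞) else 0) = 0 := by
      intro X'; rw [dif_neg h, mul_zero]
    rw [mul_zero, lintegral_congr hzero, lintegral_zero]

/-- Totalized birth factor. -/
noncomputable def ddx {E : Type*} {M : ℕ} (A : Fin M → Set E) (Vbar : ℝ) {n r : ℕ}
    (Y : Fin n → E) (B : Finset (Fin M)) (hB : B.card = n - r) (i m : Fin n) : ℝ≥0∞ :=
  if hi : (i : ℕ) - r < n - r then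
    birthPdf A Vbar (birthEnum B hB ⟨(i : ℕ) - r, hi⟩) (Y m) else 0

lemma step_lemma {E : Type*} [MeasurableSpace E] (μ : Measure E) [SigmaFinite μ]
    (K : E → E → ℝ≥0) (hKm : Measurable (Function.uncurry K))
    {M : ℕ} (A : Fin M → Set E) (Vbar α : ℝ)
    {Q : Type*} [Fintype Q] (nQ : Q → ℕ) (ω : Q → ℝ≥0)
    (p : (q : Q) → Fin (nQ q) → E → ℝ≥0) (hpm : ∀ q i, Measurable (p q i))
    {n r : ℕ} (hr : r ≤ n) (Y : Fin n → E) :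
    ∫⁻ X' : Fin r → E, mtTrans A Vbar α K r n Y X' *
        (∑ q : Q, if h : nQ q = r then (ω q : ℝ≥0∞) * ∑ σ : Equiv.Perm (Fin (nQ q)),
            ∏ i, (p q i (X' (Fin.cast h (σ i))) : ℝ≥0∞) else 0)
        ∂(Measure.pi fun _ : Fin r => μ)
    = (r.factorial : ℝ≥0∞) * ∑ q : Q, if nQ q = r then
        (∑ B : {B : Finset (Fin M) // B.card = n - r},
          ENNReal.ofReal (α ^ (n - r) * (1 - α) ^ (M - (n - r))) * (ω q : ℝ≥0∞) *
          ∑ ν : Equiv.Perm (Fin n), ∏ i : Fin n,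
            if h' : (i : ℕ) < nQ q then
              (∫⁻ x, (K (Y (ν i)) x : ℝ≥0∞) * (p q ⟨(i : ℕ), h'⟩ x : ℝ≥0∞) ∂μ)
            else ddx A Vbar Y B.1 B.2 i (ν i))
      else 0 := by
  classical
  have hKy : ∀ y : E, Measurable fun x => (K y x : ℝ≥0∞) := fun y =>
    (hKm.comp measurable_prodMk_left).coe_nnreal_ennreal
  have hconv : ∀ (B : {B : Finset (Fin M) // B.card = n - r}) (ν : Equiv.Perm (Fin n))
      (X' : Fin r → E),
      (∏ i : Fin n, if h : (i : ℕ) < r then (K (Y (ν i)) (X' ⟨i, h⟩) : ℝ≥0∞)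
        else birthPdf A Vbar
          (birthEnum B.1 B.2 ⟨(i : ℕ) - r, by have := i.isLt; omega⟩) (Y (ν i)))
      = ∏ i : Fin n, if h : (i : ℕ) < r then (K (Y (ν i)) (X' ⟨(i : ℕ), h⟩) : ℝ≥0∞)
        else ddx A Vbar Y B.1 B.2 i (ν i) := by
    intro B ν X'
    refine Finset.prod_congr rfl fun i _ => ?_
    by_cases h : (i : ℕ) < r
    · rw [dif_pos h, dif_pos h]
    · rw [dif_neg h, dif_neg h, ddx, dif_pos (by have := i.isLt; omega)]
  have hmS : ∀ B : {B : Finset (Fin M) // B.card = n - r},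
      Measurable fun X' : Fin r → E => ∑ ν : Equiv.Perm (Fin n), ∏ i : Fin n,
        if h : (i : ℕ) < r then (K (Y (ν i)) (X' ⟨(i : ℕ), h⟩) : ℝ≥0∞)
        else ddx A Vbar Y B.1 B.2 i (ν i) := by
    intro B
    refine Finset.measurable_sum _ fun ν _ => Finset.measurable_prod _ fun i _ => ?_
    by_cases h : (i : ℕ) < r
    · simpa only [dif_pos h, Function.comp_def] using (hKy (Y (ν i))).comp (measurable_pi_apply _)
    · simpa only [dif_neg h] using measurable_const
  have hmD : ∀ q : Q, Measurable fun X' : Fin r → E =>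
      if h : nQ q = r then (ω q : ℝ≥0∞) * ∑ σ : Equiv.Perm (Fin (nQ q)),
        ∏ i, (p q i (X' (Fin.cast h (σ i))) : ℝ≥0∞) else 0 := by
    intro q
    by_cases h : nQ q = r
    · simp only [dif_pos h]
      refine measurable_const.mul (Finset.measurable_sum _ fun σ _ =>
        Finset.measurable_prod _ fun i _ => ?_)
      exact ((hpm q i).comp (measurable_pi_apply _)).coe_nnreal_ennreal
    · simpa only [dif_neg h] using measurable_const
  calc ∫⁻ X' : Fin r → E, mtTrans A Vbar α K r n Y X' *
        (∑ q : Q, if h : nQ q = r then (ω q : ℝ≥0∞) * ∑ σ : Equiv.Perm (Fin (nQ q)),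
            ∏ i, (p q i (X' (Fin.cast h (σ i))) : ℝ≥0∞) else 0)
        ∂(Measure.pi fun _ : Fin r => μ)
      = ∫⁻ X' : Fin r → E, ∑ B : {B : Finset (Fin M) // B.card = n - r},
          (ENNReal.ofReal (α ^ (n - r) * (1 - α) ^ (M - (n - r))) *
            ∑ ν : Equiv.Perm (Fin n), ∏ i : Fin n,
              if h : (i : ℕ) < r then (K (Y (ν i)) (X' ⟨(i : ℕ), h⟩) : ℝ≥0∞)
              else ddx A Vbar Y B.1 B.2 i (ν i)) *
          (∑ q : Q, if h : nQ q = r then (ω q : ℝ≥0∞) * ∑ σ : Equiv.Perm (Fin (nQ q)),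
              ∏ i, (p q i (X' (Fin.cast h (σ i))) : ℝ≥0∞) else 0)
          ∂(Measure.pi fun _ : Fin r => μ) := by
        refine lintegral_congr fun X' => ?_
        rw [mtTrans, Finset.sum_mul]
        refine Finset.sum_congr rfl fun B _ => ?_
        congr 1
        congr 1
        exact Finset.sum_congr rfl fun ν _ => hconv B ν X'
    _ = ∑ B : {B : Finset (Fin M) // B.card = n - r},
        ∫⁻ X' : Fin r → E,
          (ENNReal.ofReal (α ^ (n - r) * (1 - α) ^ (M - (n - r))) *
            ∑ ν : Equiv.Perm (Fin n), ∏ i : Fin n,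
              if h : (i : ℕ) < r then (K (Y (ν i)) (X' ⟨(i : ℕ), h⟩) : ℝ≥0∞)
              else ddx A Vbar Y B.1 B.2 i (ν i)) *
          (∑ q : Q, if h : nQ q = r then (ω q : ℝ≥0∞) * ∑ σ : Equiv.Perm (Fin (nQ q)),
              ∏ i, (p q i (X' (Fin.cast h (σ i))) : ℝ≥0∞) else 0)
          ∂(Measure.pi fun _ : Fin r => μ) :=
        lintegral_finset_sum _ fun B _ =>
          (measurable_const.mul (hmS B)).mul (Finset.measurable_sum _ fun q _ => hmD q)
    _ = ∑ B : {B : Finset (Fin M) // B.card = n - r},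
        (r.factorial : ℝ≥0∞) * ∑ q : Q, if nQ q = r then
          ENNReal.ofReal (α ^ (n - r) * (1 - α) ^ (M - (n - r))) * (ω q : ℝ≥0∞) *
          ∑ ν : Equiv.Perm (Fin n), ∏ i : Fin n,
            if h' : (i : ℕ) < nQ q then
              (∫⁻ x, (K (Y (ν i)) x : ℝ≥0∞) * (p q ⟨(i : ℕ), h'⟩ x : ℝ≥0∞) ∂μ)
            else ddx A Vbar Y B.1 B.2 i (ν i)
          else 0 :=
        Finset.sum_congr rfl fun B _ =>
          step_abstract μ K hKm nQ ω p hpm hr Y (ddx A Vbar Y B.1 B.2) _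
    _ = (r.factorial : ℝ≥0∞) * ∑ B : {B : Finset (Fin M) // B.card = n - r},
        ∑ q : Q, if nQ q = r then
          ENNReal.ofReal (α ^ (n - r) * (1 - α) ^ (M - (n - r))) * (ω q : ℝ≥0∞) *
          ∑ ν : Equiv.Perm (Fin n), ∏ i : Fin n,
            if h' : (i : ℕ) < nQ q then
              (∫⁻ x, (K (Y (ν i)) x : ℝ≥0∞) * (p q ⟨(i : ℕ), h'⟩ x : ℝ≥0∞) ∂μ)
            else ddx A Vbar Y B.1 B.2 i (ν i)
          else 0 := (Finset.mul_sum _ _ _).symm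
    _ = (r.factorial : ℝ≥0∞) * ∑ q : Q, if nQ q = r then
        (∑ B : {B : Finset (Fin M) // B.card = n - r},
          ENNReal.ofReal (α ^ (n - r) * (1 - α) ^ (M - (n - r))) * (ω q : ℝ≥0∞) *
          ∑ ν : Equiv.Perm (Fin n), ∏ i : Fin n,
            if h' : (i : ℕ) < nQ q then
              (∫⁻ x, (K (Y (ν i)) x : ℝ≥0∞) * (p q ⟨(i : ℕ), h'⟩ x : ℝ≥0∞) ∂μ)
            else ddx A Vbar Y B.1 B.2 i (ν i))
        else 0 := by
        congr 1
        rw [Finset.sum_comm]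
        refine Finset.sum_congr rfl fun q _ => ?_
        by_cases h : nQ q = r
        · simp only [if_pos h]
        · simp only [if_neg h, Finset.sum_const_zero]

/-- **Proposition 4 (FISST prediction with target birth).**  Given a finite set `Q` of
hypotheses with cardinalities `nQ q`, weights `ω q ≥ 0`, single-target pdfs `p q i`, the
prior family `p(X',r) = ∑_{q : nQ q = r} ω_q ∑_μ ∏ᵢ p_{q,i}(x'_{μ i})`, a single-target
transition density `K` with predicted components `p⁻_{q,i}`, and the binomial birth model,
the predicted family `p⁻(Y,n) = ∑_{r ≤ n} (1/r!) ∫_{E^r} p(Y,n|X',r) p(X',r) dμ^{⊗r}`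
satisfies, for every `Y ∈ Eⁿ`,
`p⁻(Y,n) = ∑_q ∑_{|B| = n−nQ q} α^{n−nQ q}(1−α)^{M−(n−nQ q)} ω_q
   ∑_ν ∏_{i<nQ q} p⁻_{q,i}(y_{ν i}) ∏_{nQ q≤i<n} b_{B(i−nQ q)}(y_{ν i})`:
each predicted hypothesis is a pair of a prior hypothesis and a birth hypothesis, with
weight `p(B) ω_q` and pdf the symmetrized product of predicted components and birth
pdfs. -/
theorem fisst_prediction_with_birth
    {E : Type*} [MeasurableSpace E] (μ : Measure E) [SigmaFinite μ]
    (K : E → E → ℝ≥0) (hKm : Measurable (Function.uncurry K))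
    (hK1 : ∀ x, ∫⁻ y, (K y x : ℝ≥0∞) ∂μ = 1)
    (M : ℕ) (A : Fin M → Set E)
    (hAmeas : ∀ j, MeasurableSet (A j))
    (hAdisj : Pairwise (Function.onFun Disjoint A))
    (Vbar : ℝ) (hVbar : 0 < Vbar) (hAvol : ∀ j, μ (A j) = ENNReal.ofReal Vbar)
    (α : ℝ) (hα : α ∈ Set.Icc (0 : ℝ) 1)
    {Q : Type*} [Fintype Q]
    (nQ : Q → ℕ) (ω : Q → ℝ≥0)
    (p : (q : Q) → Fin (nQ q) → E → ℝ≥0)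
    (hpm : ∀ q i, Measurable (p q i))
    (hp1 : ∀ q i, ∫⁻ x, (p q i x : ℝ≥0∞) ∂μ = 1)
    (pPrior : (r : ℕ) → (Fin r → E) → ℝ≥0∞)
    (hpPrior : ∀ r X', pPrior r X' = ∑ q : Q,
      if h : nQ q = r then
        (ω q : ℝ≥0∞) * ∑ ν : Equiv.Perm (Fin (nQ q)),
          ∏ i, (p q i (X' (Fin.cast h (ν i))) : ℝ≥0∞)
      else 0)
    (ppred : (q : Q) → Fin (nQ q) → E → ℝ≥0∞)
    (hppred : ∀ q i y, ppred q i y = ∫⁻ x, (K y x : ℝ≥0∞) * (p q i x : ℝ≥0∞) ∂μ)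
    (pPredFam : (n : ℕ) → (Fin n → E) → ℝ≥0∞)
    (hpPredFam : ∀ n Y, pPredFam n Y = ∑ r : Fin (n + 1),
      (∫⁻ X' : Fin (r : ℕ) → E, mtTrans A Vbar α K (r : ℕ) n Y X' * pPrior (r : ℕ) X'
        ∂(Measure.pi fun _ : Fin (r : ℕ) => μ)) / (Nat.factorial (r : ℕ) : ℝ≥0∞)) :
    ∀ (n : ℕ) (Y : Fin n → E),
      pPredFam n Y = ∑ q : Q,
        if h : nQ q ≤ n then
          ∑ B : {B : Finset (Fin M) // B.card = n - nQ q},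
            ENNReal.ofReal (α ^ (n - nQ q) * (1 - α) ^ (M - (n - nQ q))) *
              (ω q : ℝ≥0∞) *
              ∑ ν : Equiv.Perm (Fin n), ∏ i : Fin n,
                if h' : (i : ℕ) < nQ q then ppred q ⟨i, h'⟩ (Y (ν i))
                else birthPdf A Vbar
                  (birthEnum B.1 B.2 ⟨(i : ℕ) - nQ q, by have := i.isLt; omega⟩)
                  (Y (ν i))
        else 0 := by

  classical
  intro n Y
  rw [hpPredFam n Y]
  simp_rw [hpPrior, hppred]
  have hstep : ∀ r : Fin (n + 1),
      (∫⁻ X' : Fin (r : ℕ) → E, mtTrans A Vbar α K (r : ℕ) n Y X' *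
          (∑ q : Q, if h : nQ q = (r : ℕ) then (ω q : ℝ≥0∞) *
            ∑ ν : Equiv.Perm (Fin (nQ q)),
              ∏ i, (p q i (X' (Fin.cast h (ν i))) : ℝ≥0∞) else 0)
          ∂(Measure.pi fun _ : Fin (r : ℕ) => μ)) / (Nat.factorial (r : ℕ) : ℝ≥0∞)
      = ∑ q : Q, if nQ q = (r : ℕ) then
          (∑ B : {B : Finset (Fin M) // B.card = n - (r : ℕ)},
            ENNReal.ofReal (α ^ (n - (r : ℕ)) * (1 - α) ^ (M - (n - (r : ℕ)))) *
              (ω q : ℝ≥0∞) *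
            ∑ ν : Equiv.Perm (Fin n), ∏ i : Fin n,
              if h' : (i : ℕ) < nQ q then
                (∫⁻ x, (K (Y (ν i)) x : ℝ≥0∞) * (p q ⟨(i : ℕ), h'⟩ x : ℝ≥0∞) ∂μ)
              else ddx A Vbar Y B.1 B.2 i (ν i))
        else 0 := by
    intro r
    rw [step_lemma μ K hKm A Vbar α nQ ω p hpm (Nat.lt_succ_iff.mp r.isLt) Y]
    rw [mul_comm, mul_div_assoc,
      ENNReal.div_self (by exact_mod_cast (Nat.factorial_ne_zero (r : ℕ)))
        (ENNReal.natCast_ne_top _), mul_one]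
  calc ∑ r : Fin (n + 1),
        (∫⁻ X' : Fin (r : ℕ) → E, mtTrans A Vbar α K (r : ℕ) n Y X' *
          (∑ q : Q, if h : nQ q = (r : ℕ) then (ω q : ℝ≥0∞) *
            ∑ ν : Equiv.Perm (Fin (nQ q)),
              ∏ i, (p q i (X' (Fin.cast h (ν i))) : ℝ≥0∞) else 0)
          ∂(Measure.pi fun _ : Fin (r : ℕ) => μ)) / (Nat.factorial (r : ℕ) : ℝ≥0∞)
      = ∑ r : Fin (n + 1), ∑ q : Q, if nQ q = (r : ℕ) then
          (∑ B : {B : Finset (Fin M) // B.card = n - (r : ℕ)},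
            ENNReal.ofReal (α ^ (n - (r : ℕ)) * (1 - α) ^ (M - (n - (r : ℕ)))) *
              (ω q : ℝ≥0∞) *
            ∑ ν : Equiv.Perm (Fin n), ∏ i : Fin n,
              if h' : (i : ℕ) < nQ q then
                (∫⁻ x, (K (Y (ν i)) x : ℝ≥0∞) * (p q ⟨(i : ℕ), h'⟩ x : ℝ≥0∞) ∂μ)
              else ddx A Vbar Y B.1 B.2 i (ν i))
        else 0 := Finset.sum_congr rfl fun r _ => hstep r
    _ = _ := by
        rw [Finset.sum_comm]
        refine Finset.sum_congr rfl fun q _ => ?_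
        by_cases h : nQ q ≤ n
        · rw [dif_pos h]
          rw [Finset.sum_eq_single (⟨nQ q, by omega⟩ : Fin (n + 1))]
          · rw [if_pos rfl]
            simp only [show ((⟨nQ q, by omega⟩ : Fin (n + 1)) : ℕ) = nQ q from rfl]
            refine Finset.sum_congr rfl fun B _ => ?_
            congr 1
            refine Finset.sum_congr rfl fun ν _ => Finset.prod_congr rfl fun i _ => ?_
            by_cases h' : (i : ℕ) < nQ q
            · rw [dif_pos h', dif_pos h']
            · rw [dif_neg h', dif_neg h', ddx, dif_pos (by have := i.isLt; omega)]
          · intro r _ hne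
            exact if_neg fun hc => hne (Fin.ext hc.symm)
          · intro hmem
            exact absurd (Finset.mem_univ _) hmem
        · rw [dif_neg h]
          refine Finset.sum_eq_zero fun r _ => ?_
          exact if_neg fun hc => h (by have := Nat.lt_succ_iff.mp r.isLt; omega)
end

section
/- Let Q be a finite nonempty set of n-target hypotheses, where hypothesis q has weight ω_q ≥ 0 and single-target pdfs p_{q,1}, …, p_{q,n}, and assume every single-target evidence e_{q,σ,i} := ∫_E ℓ̃(σ, i, x) p_{q,i}(x) dμ(x) is finite and positive. For each pair (q, σ) of a hypothesis and a data association for n targets, define the FISST unnormalized posterior weight W_F(q,σ) = ω_q · p(σ|n) · (k(σ)!/V^{k(σ)}) ∏_{i=1}^n e_{q,σ,i}, and Reid's HOMHT unnormalized posterior weight W_R(q,σ) = ω_q · p_D^{m−k(σ)} (1−p_D)^{n−(m−k(σ))} λ^{k(σ)} ∏_{i=1}^n e_{q,σ,i}. Then W_F(q,σ) = e^{−λV} · W_R(q,σ) for every pair (q, σ); consequently, if 0 < ∑_{(q,σ)} W_R(q,σ) < ∞, the normalized weights coincide: W_F(q,σ)/∑_{(q',σ')} W_F(q',σ') = W_R(q,σ)/∑_{(q',σ')}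 W_R(q',σ'). (FISST–HOMHT equivalence for a fixed number of targets, Section IV-A.) -/
open MeasureTheory
open scoped NNReal ENNReal

/-- A data association for `n` targets and `m` measurements: a map
`σ : Fin n → Option (Fin m)` injective on `{i : σ i ≠ none}`. -/
def IsDataAssoc {n m : ℕ} (σ : Fin n → Option (Fin m)) : Prop :=
  ∀ i j : Fin n, σ i ≠ none → σ i = σ j → i = j

instance {n m : ℕ} : DecidablePred (IsDataAssoc (n := n) (m := m)) := fun _ =>
  by unfold IsDataAssoc; infer_instance

abbrev DataAssoc (n m : ℕ) := {σ : Fin n → Option (Fin m) // IsDataAssoc σ}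

/-- Clutter count `k(σ) = m − #{i : σ i ≠ none}`. -/
def kclutter {n m : ℕ} (σ : Fin n → Option (Fin m)) : ℕ :=
  m - (Finset.univ.filter fun i => σ i ≠ none).card

/-- `ℓ̃(σ, i, x) = ℓ(z_j, x)` if `σ i = some j`, and `= 1` if `σ i = none`. -/
def ltil {Z E : Type*} {n m : ℕ} (ℓ : Z → E → ℝ≥0) (z : Fin m → Z)
    (σ : Fin n → Option (Fin m)) (i : Fin n) (x : E) : ℝ≥0 :=
  (σ i).elim 1 fun j => ℓ (z j) x

/-- Prior association probability
`p(σ|n) = p_D^{m−k} (1−p_D)^{n−(m−k)} e^{−λV} (λV)^k / k!`. -/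
noncomputable def pAssoc (pD lam V : ℝ) (n m k : ℕ) : ℝ≥0∞ :=
  ENNReal.ofReal (pD ^ (m - k) * (1 - pD) ^ (n - (m - k)) *
    (Real.exp (-(lam * V)) * ((lam * V) ^ k / (Nat.factorial k))))

/-- **FISST–HOMHT equivalence for a fixed number of targets (Section IV-A).**  For a
finite nonempty set `Q` of `n`-target hypotheses with weights `ω q ≥ 0` and single-target
pdfs `p q i`, all single-target evidences `e q σ i = ∫ ℓ̃(σ,i,x) p_{q,i}(x) dμ(x)` finite
and positive, the FISST unnormalized posterior weight
`W_F(q,σ) = ω_q p(σ|n) (k(σ)!/V^{k(σ)}) ∏ᵢ e q σ i` and Reid's HOMHT unnormalized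
posterior weight
`W_R(q,σ) = ω_q p_D^{m−k(σ)} (1−p_D)^{n−(m−k(σ))} λ^{k(σ)} ∏ᵢ e q σ i` satisfy
`W_F(q,σ) = e^{−λV} W_R(q,σ)`; consequently, if `0 < ∑ W_R < ∞`, the normalized weights
coincide. -/
theorem fisst_homht_equivalence_fixed_targets
    {E : Type*} [MeasurableSpace E] (μ : Measure E) [SigmaFinite μ]
    {Z : Type*} [MeasurableSpace Z] (m : ℕ) (z : Fin m → Z)
    (ℓ : Z → E → ℝ≥0) (hℓm : Measurable (Function.uncurry ℓ))
    (pD lam V : ℝ) (hpD : pD ∈ Set.Icc (0 : ℝ) 1) (hlam : 0 < lam) (hV : 0 < V)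
    {Q : Type*} [Fintype Q] [Nonempty Q]
    (n : ℕ) (ω : Q → ℝ≥0)
    (p : Q → Fin n → E → ℝ≥0)
    (hpm : ∀ q i, Measurable (p q i))
    (hp1 : ∀ q i, ∫⁻ x, (p q i x : ℝ≥0∞) ∂μ = 1)
    (e : Q → DataAssoc n m → Fin n → ℝ≥0∞)
    (he : ∀ q σ i, e q σ i = ∫⁻ x, (ltil ℓ z σ.1 i x : ℝ≥0∞) * (p q i x : ℝ≥0∞) ∂μ)
    (he_fin : ∀ q σ i, e q σ i ≠ ∞) (he_pos : ∀ q σ i, 0 < e q σ i)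
    (WF WR : Q × DataAssoc n m → ℝ≥0∞)
    (hWF : ∀ q σ, WF (q, σ) =
      (ω q : ℝ≥0∞) * pAssoc pD lam V n m (kclutter σ.1) *
        (ENNReal.ofReal ((Nat.factorial (kclutter σ.1)) / V ^ (kclutter σ.1)) *
          ∏ i, e q σ i))
    (hWR : ∀ q σ, WR (q, σ) =
      (ω q : ℝ≥0∞) *
        ENNReal.ofReal (pD ^ (m - kclutter σ.1) *
          (1 - pD) ^ (n - (m - kclutter σ.1)) * lam ^ (kclutter σ.1)) *
        ∏ i, e q σ i) :
    (∀ (q : Q) (σ : DataAssoc n m),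
        WF (q, σ) = ENNReal.ofReal (Real.exp (-(lam * V))) * WR (q, σ)) ∧
    (0 < ∑ x : Q × DataAssoc n m, WR x → (∑ x : Q × DataAssoc n m, WR x) ≠ ∞ →
      ∀ (q : Q) (σ : DataAssoc n m),
        WF (q, σ) / ∑ x : Q × DataAssoc n m, WF x =
          WR (q, σ) / ∑ x : Q × DataAssoc n m, WR x) := by

  obtain ⟨hpD0, hpD1⟩ := hpD
  set c : ℝ≥0∞ := ENNReal.ofReal (Real.exp (-(lam * V))) with hc
  have hc0 : c ≠ 0 := by
    simp [hc, ENNReal.ofReal_eq_zero, not_le, Real.exp_pos]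
  have hcT : c ≠ ∞ := ENNReal.ofReal_ne_top
  have key : ∀ (q : Q) (σ : DataAssoc n m),
      WF (q, σ) = c * WR (q, σ) := by
    intro q σ
    rw [hWF q σ, hWR q σ, pAssoc]
    set k := kclutter σ.1 with hk
    set A := pD ^ (m - k) * (1 - pD) ^ (n - (m - k)) with hA
    have hA0 : 0 ≤ A := mul_nonneg (pow_nonneg hpD0 _)
      (pow_nonneg (by linarith) _)
    have hexp : (0:ℝ) ≤ Real.exp (-(lam * V)) := (Real.exp_pos _).le
    have hfac : (0:ℝ) < (Nat.factorial k : ℝ) := by positivity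
    have hVk : (0:ℝ) < V ^ k := by positivity
    have hmain : ENNReal.ofReal (A * (Real.exp (-(lam * V)) * ((lam * V) ^ k / (Nat.factorial k)))) *
        ENNReal.ofReal ((Nat.factorial k : ℝ) / V ^ k)
        = c * ENNReal.ofReal (A * lam ^ k) := by
      rw [hc, ← ENNReal.ofReal_mul (by positivity), ← ENNReal.ofReal_mul hexp]
      congr 1
      field_simp
      ring
    calc (ω q : ℝ≥0∞) * ENNReal.ofReal (A * (Real.exp (-(lam * V)) * ((lam * V) ^ k / (Nat.factorial k)))) *
          (ENNReal.ofReal ((Nat.factorial k : ℝ) / V ^ k) * ∏ i, e q σ i)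
        = (ENNReal.ofReal (A * (Real.exp (-(lam * V)) * ((lam * V) ^ k / (Nat.factorial k)))) *
            ENNReal.ofReal ((Nat.factorial k : ℝ) / V ^ k)) * ((ω q : ℝ≥0∞) * ∏ i, e q σ i) := by ring
      _ = c * ENNReal.ofReal (A * lam ^ k) * ((ω q : ℝ≥0∞) * ∏ i, e q σ i) := by rw [hmain]
      _ = c * ((ω q : ℝ≥0∞) * ENNReal.ofReal (A * lam ^ k) * ∏ i, e q σ i) := by ring
  refine ⟨key, ?_⟩
  intro hpos hfin q σ
  have hsum : ∑ x : Q × DataAssoc n m, WF x = c * ∑ x : Q × DataAssoc n m, WR x := by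
    rw [Finset.mul_sum]
    refine Finset.sum_congr rfl fun x _ => ?_
    obtain ⟨q', σ'⟩ := x
    exact key q' σ'
  rw [key q σ, hsum, ENNReal.mul_div_mul_left _ _ hc0 hcT]
end

section
/- Fix a prior hypothesis q with r targets and predicted single-target pdfs p⁻_{q,1}, …, p⁻_{q,r}, a birth hypothesis B ⊆ {1,…,M} with |B| = n − r, and a data association σ_a for n targets (indices 1,…,r are the existing targets and r+1,…,n the births) with clutter count k = k(σ_a), such that exactly s of the birth indices i ∈ {r+1,…,n} have σ_a(i) ≠ none. Assume the full-state measurement condition ∫_E ℓ(z, x) dμ(x) = 1 for every z ∈ Z, and that for each birth index i with σ_a(i) = some j, the likelihood ℓ(z_j, ·) vanishes outside the pixel A_{B(i−r)}. Set α = λ_B V̄ with λ_B > 0. Then the unnormalized FISST grandchild weight ω_q · α^{n−r}(1−α)^{M−(n−r)} · p(σ_a|n) · l, where l = (k!/V^k) [∏_{i=1}^r ∫_E ℓ̃(σ_a, i, x) p⁻_{q,i}(x) dμ(x)] · [∏_{i=r+1}^n ∫_E ℓ̃(σ_a, i, x) b_{B(i−r)}(x) dμ(x)], equals e^{−λV}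 (1−p_D)^{n−(m−k)} p_D^{m−k} [∏_{i=1}^r ∫_E ℓ̃(σ_a, i, x) p⁻_{q,i}(x) dμ(x)] · λ_B^{n−r} V̄^{(n−r)−s} (1−λ_B V̄)^{M−(n−r)} λ^k ω_q. (Exact form of the simplified FISST weight with birth, Eqs. 29 and 34.) -/
open MeasureTheory
open scoped NNReal ENNReal

set_option maxHeartbeats 2000000 in
/-- **Exact form of the simplified FISST weight with birth (Eqs. 29 and 34).**  For a
prior hypothesis `q` with `r` targets and predicted pdfs `p⁻_{q,i}`, a birth hypothesis
`B` with `|B| = n−r`, and a data association `σ_a` for `n` targets with clutter count `k`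
and exactly `s` detected births, under the full-state measurement condition and the
condition that every detected-birth likelihood vanishes outside its hypothesized pixel,
with `α = λ_B V̄`, the unnormalized FISST grandchild weight
`ω_q α^{n−r}(1−α)^{M−(n−r)} p(σ_a|n) l` equals
`e^{−λV} (1−p_D)^{n−(m−k)} p_D^{m−k} (∏_{i≤r} ∫ ℓ̃(σ_a,i,x) p⁻_{q,i}(x) dμ)
  λ_B^{n−r} V̄^{(n−r)−s} (1−λ_B V̄)^{M−(n−r)} λ^k ω_q`. -/
theorem fisst_birth_weight_simplification
    {E : Type*} [MeasurableSpace E] (μ : Measure E) [SigmaFinite μ]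
    {Z : Type*} [MeasurableSpace Z] (m : ℕ) (z : Fin m → Z)
    (ℓ : Z → E → ℝ≥0) (hℓm : Measurable (Function.uncurry ℓ))
    (pD lam V : ℝ) (hpD : pD ∈ Set.Icc (0 : ℝ) 1) (hlam : 0 < lam) (hV : 0 < V)
    (M : ℕ) (A : Fin M → Set E)
    (hAmeas : ∀ j, MeasurableSet (A j))
    (hAdisj : Pairwise (Function.onFun Disjoint A))
    (Vbar : ℝ) (hVbar : 0 < Vbar) (hAvol : ∀ j, μ (A j) = ENNReal.ofReal Vbar)
    (lamB : ℝ) (hlamB : 0 < lamB) (hα : lamB * Vbar ≤ 1)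
    (r n : ℕ) (hrn : r ≤ n)
    (ωq : ℝ≥0)
    (pq : Fin r → E → ℝ≥0)
    (hpqm : ∀ i, Measurable (pq i))
    (hpq1 : ∀ i, ∫⁻ x, (pq i x : ℝ≥0∞) ∂μ = 1)
    (B : Finset (Fin M)) (hB : B.card = n - r)
    (σa : DataAssoc n m)
    (s : ℕ)
    (hs : (Finset.univ.filter fun jb : Fin (n - r) =>
      (σa.1 ⟨r + (jb : ℕ), by have := jb.isLt; omega⟩).isSome).card = s)
    (hfull : ∀ zz : Z, ∫⁻ x, (ℓ zz x : ℝ≥0∞) ∂μ = 1)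
    (hvanish : ∀ (jb : Fin (n - r)) (j : Fin m),
      σa.1 ⟨r + (jb : ℕ), by have := jb.isLt; omega⟩ = some j →
      ∀ x ∉ A (birthEnum B hB jb), ℓ (z j) x = 0) :
    (ωq : ℝ≥0∞) *
      ENNReal.ofReal ((lamB * Vbar) ^ (n - r) * (1 - lamB * Vbar) ^ (M - (n - r))) *
      pAssoc pD lam V n m (kclutter σa.1) *
      (ENNReal.ofReal
          ((Nat.factorial (kclutter σa.1)) / V ^ (kclutter σa.1)) *
        (∏ i : Fin r,
          ∫⁻ x, (ltil ℓ z σa.1 (Fin.castLE hrn i) x : ℝ≥0∞) * (pq i x : ℝ≥0∞) ∂μ) *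
        ∏ jb : Fin (n - r),
          ∫⁻ x, (ltil ℓ z σa.1 ⟨r + (jb : ℕ), by have := jb.isLt; omega⟩ x : ℝ≥0∞) *
            birthPdf A Vbar (birthEnum B hB jb) x ∂μ) =
    ENNReal.ofReal (Real.exp (-(lam * V)) *
        ((1 - pD) ^ (n - (m - kclutter σa.1)) * pD ^ (m - kclutter σa.1))) *
      (∏ i : Fin r,
        ∫⁻ x, (ltil ℓ z σa.1 (Fin.castLE hrn i) x : ℝ≥0∞) * (pq i x : ℝ≥0∞) ∂μ) *
      ENNReal.ofReal (lamB ^ (n - r) * Vbar ^ ((n - r) - s) *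
        (1 - lamB * Vbar) ^ (M - (n - r)) * lam ^ (kclutter σa.1)) *
      (ωq : ℝ≥0∞) := by
  obtain ⟨hpD0, hpD1⟩ := hpD
  have hVbar' : Vbar ≠ 0 := hVbar.ne'
  have h1α : (0:ℝ) ≤ 1 - lamB * Vbar := by linarith
  have hsle : s ≤ n - r := by
    rw [← hs]
    exact (Finset.card_filter_le _ _).trans (by simp)
  set k := kclutter σa.1 with hkdef
  -- birth integrals
  have key : ∀ jb : Fin (n - r),
      (∫⁻ x, (ltil ℓ z σa.1 ⟨r + (jb : ℕ), by have := jb.isLt; omega⟩ x : ℝ≥0∞) *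
        birthPdf A Vbar (birthEnum B hB jb) x ∂μ)
      = if (σa.1 ⟨r + (jb : ℕ), by have := jb.isLt; omega⟩).isSome
        then ENNReal.ofReal (1 / Vbar) else 1 := by
    intro jb
    have hlt := jb.isLt
    rcases hσ : σa.1 ⟨r + (jb : ℕ), by omega⟩ with - | j
    · rw [if_neg (by simp [hσ])]
      have heq : ∀ x, (ltil ℓ z σa.1 ⟨r + (jb : ℕ), by omega⟩ x : ℝ≥0∞) *
          birthPdf A Vbar (birthEnum B hB jb) x = birthPdf A Vbar (birthEnum B hB jb) x := by
        intro x; simp [ltil, hσ]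
      rw [lintegral_congr heq]
      unfold birthPdf
      rw [lintegral_indicator (hAmeas _), setLIntegral_const, hAvol,
        ← ENNReal.ofReal_mul (by positivity)]
      rw [one_div, inv_mul_cancel₀ hVbar', ENNReal.ofReal_one]
    · rw [if_pos (by simp [hσ])]
      have heq : ∀ x, (ltil ℓ z σa.1 ⟨r + (jb : ℕ), by omega⟩ x : ℝ≥0∞) *
          birthPdf A Vbar (birthEnum B hB jb) x
          = ENNReal.ofReal (1 / Vbar) * (ℓ (z j) x : ℝ≥0∞) := by
        intro x
        by_cases hx : x ∈ A (birthEnum B hB jb)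
        · simp [ltil, hσ, birthPdf, Set.indicator_of_mem hx, mul_comm]
        · simp [ltil, hσ, birthPdf, Set.indicator_of_notMem hx,
            hvanish jb j hσ x hx]
      rw [lintegral_congr heq, lintegral_const_mul' _ _ ENNReal.ofReal_ne_top,
        hfull (z j), mul_one]
  have hbirth : (∏ jb : Fin (n - r),
      ∫⁻ x, (ltil ℓ z σa.1 ⟨r + (jb : ℕ), by have := jb.isLt; omega⟩ x : ℝ≥0∞) *
        birthPdf A Vbar (birthEnum B hB jb) x ∂μ)
      = ENNReal.ofReal ((1 / Vbar) ^ s) := by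
    rw [Finset.prod_congr rfl fun jb _ => key jb, Finset.prod_ite,
      Finset.prod_const, Finset.prod_const_one, mul_one]
    rw [ENNReal.ofReal_pow (by positivity), ← hs]
  -- main real-number identity
  have hfac : ((Nat.factorial k : ℝ)) ≠ 0 := Nat.cast_ne_zero.mpr (Nat.factorial_ne_zero k)
  have hA : ((lamB * Vbar) ^ (n - r) * (1 - lamB * Vbar) ^ (M - (n - r))) *
      (pD ^ (m - k) * (1 - pD) ^ (n - (m - k)) *
        (Real.exp (-(lam * V)) * ((lam * V) ^ k / (Nat.factorial k)))) *
      ((Nat.factorial k : ℝ) / V ^ k) * ((1 / Vbar) ^ s)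
      = (Real.exp (-(lam * V)) * ((1 - pD) ^ (n - (m - k)) * pD ^ (m - k))) *
        (lamB ^ (n - r) * Vbar ^ ((n - r) - s) *
          (1 - lamB * Vbar) ^ (M - (n - r)) * lam ^ k) := by
    have h1 : Vbar ^ (n - r - s) = Vbar ^ (n - r) / Vbar ^ s :=
      pow_sub₀ _ hVbar' hsle
    rw [h1, mul_pow, mul_pow]
    field_simp
    have hVs : Vbar ^ s * Vbar⁻¹ ^ s = 1 := by
      rw [← mul_pow, mul_inv_cancel₀ hVbar', one_pow]
    linear_combination (pD ^ (m - k) * (1 - lamB * Vbar) ^ (M - (n - r)) *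
      (1 - pD) ^ (n - (m - k))) * hVs
  have ha1 : (0:ℝ) ≤ (lamB * Vbar) ^ (n - r) * (1 - lamB * Vbar) ^ (M - (n - r)) :=
    mul_nonneg (pow_nonneg (by positivity) _) (pow_nonneg h1α _)
  have ha2 : (0:ℝ) ≤ pD ^ (m - k) * (1 - pD) ^ (n - (m - k)) *
      (Real.exp (-(lam * V)) * ((lam * V) ^ k / (Nat.factorial k))) := by
    have : (0:ℝ) ≤ 1 - pD := by linarith
    positivity
  have ha3 : (0:ℝ) ≤ (Nat.factorial k : ℝ) / V ^ k := by positivity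
  have hb1 : (0:ℝ) ≤ Real.exp (-(lam * V)) * ((1 - pD) ^ (n - (m - k)) * pD ^ (m - k)) := by
    have : (0:ℝ) ≤ 1 - pD := by linarith
    positivity
  have hS : ENNReal.ofReal ((lamB * Vbar) ^ (n - r) * (1 - lamB * Vbar) ^ (M - (n - r))) *
      ENNReal.ofReal (pD ^ (m - k) * (1 - pD) ^ (n - (m - k)) *
        (Real.exp (-(lam * V)) * ((lam * V) ^ k / (Nat.factorial k)))) *
      ENNReal.ofReal ((Nat.factorial k : ℝ) / V ^ k) *
      ENNReal.ofReal ((1 / Vbar) ^ s)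
      = ENNReal.ofReal (Real.exp (-(lam * V)) *
          ((1 - pD) ^ (n - (m - k)) * pD ^ (m - k))) *
        ENNReal.ofReal (lamB ^ (n - r) * Vbar ^ ((n - r) - s) *
          (1 - lamB * Vbar) ^ (M - (n - r)) * lam ^ k) := by
    rw [← ENNReal.ofReal_mul ha1, ← ENNReal.ofReal_mul (mul_nonneg ha1 ha2),
      ← ENNReal.ofReal_mul (mul_nonneg (mul_nonneg ha1 ha2) ha3), hA,
      ENNReal.ofReal_mul hb1]
  rw [hbirth]
  unfold pAssoc
  set P : ℝ≥0∞ := ∏ i : Fin r,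
    ∫⁻ x, (ltil ℓ z σa.1 (Fin.castLE hrn i) x : ℝ≥0∞) * (pq i x : ℝ≥0∞) ∂μ with hP
  set O1 := ENNReal.ofReal ((lamB * Vbar) ^ (n - r) * (1 - lamB * Vbar) ^ (M - (n - r)))
  set O2 := ENNReal.ofReal (pD ^ (m - k) * (1 - pD) ^ (n - (m - k)) *
    (Real.exp (-(lam * V)) * ((lam * V) ^ k / (Nat.factorial k))))
  set O3 := ENNReal.ofReal ((Nat.factorial k : ℝ) / V ^ k)
  set O4 := ENNReal.ofReal ((1 / Vbar) ^ s)
  set O5 := ENNReal.ofReal (Real.exp (-(lam * V)) *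
    ((1 - pD) ^ (n - (m - k)) * pD ^ (m - k)))
  set O6 := ENNReal.ofReal (lamB ^ (n - r) * Vbar ^ ((n - r) - s) *
    (1 - lamB * Vbar) ^ (M - (n - r)) * lam ^ k)
  calc (ωq : ℝ≥0∞) * O1 * O2 * (O3 * P * O4)
      = (ωq : ℝ≥0∞) * P * (O1 * O2 * O3 * O4) := by ring
    _ = (ωq : ℝ≥0∞) * P * (O5 * O6) := by rw [hS]
    _ = O5 * P * O6 * (ωq : ℝ≥0∞) := by ring
end
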